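/- arXiv:math/9804150 — 2 statements merged into one kernel-verified Lean document; each statement's English description precedes it below -/
import Mathlib

section
/- Improved Cheeger inequality for bounded forms: Suppose J is symmetric, K = 0, and ‖J(·,E)‖_op ≤ M < ∞ (i.e., J(dx,E) ≤ M π(dx)). Let k' = inf_{0<π(A)≤1/2} J(A×Aᶜ)/π(A). Then the spectral gap satisfies λ₁ ≥ M(1 − √(1 − k'²/M²)) = k'²/(M(1 + √(1 − k'²/M²))) ≥ k'²/(2M). -/
/-!
Split `f - c`, for a median `c` of `f`, into its positive and negative parts `g`; each is
supported on a set of measure at most `1/2`, and their Dirichlet energies add up to at most that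
of `f`. For such a `g`, write `P = ∫ g²`, `D = ∬ (g x - g y)² J` and `Q = ∬ (g x + g y)² J`.
The co-area formula and the Cheeger inequality for the level sets `{g² > t}` give
`2 k' P ≤ ∬ |g x² - g y²| J ≤ √(D Q)` (Cauchy–Schwarz), while the parallelogram law and
`J(dx, E) ≤ M π(dx)` give `Q + D ≤ 4 M P`. Eliminating `Q` leaves the quadratic inequality
`D² - 4 M P D + 4 k'² P² ≤ 0`, hence `D ≥ 2 (M - √(M² - k'²)) P`. Summing over the two parts and
using `∫ (f - c)² = 1 + c² ≥ 1` gives `λ₁ ≥ M - √(M² - k'²)`.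
-/

open MeasureTheory Set ENNReal Filter ProbabilityTheory

lemma posPart_sq_add_negPart_sq (a : ℝ) : a⁺ ^ 2 + a⁻ ^ 2 = a ^ 2 := by
  rcases le_total a 0 with ha | ha <;> simp [ha]

lemma posPart_sub_posPart_sq_add_negPart_sub_negPart_sq_le (a b : ℝ) :
    (a⁺ - b⁺) ^ 2 + (a⁻ - b⁻) ^ 2 ≤ (a - b) ^ 2 := by
  rcases le_total a 0 with ha | ha <;> rcases le_total b 0 with hb | hb <;>
    simp [ha, hb] <;> nlinarith

lemma two_mul_sub_sqrt_mul_le {M k P D Q : ℝ} (hP : 0 ≤ P) (hD : 0 ≤ D)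
    (hCS : (2 * k * P) ^ 2 ≤ Q * D) (hQD : Q + D ≤ 4 * M * P) :
    2 * (M - √(M ^ 2 - k ^ 2)) * P ≤ D := by
  have ht : M ^ 2 - k ^ 2 ≤ √(M ^ 2 - k ^ 2) ^ 2 := Real.sq_sqrt' ▸ le_max_left _ _
  have hsq : (D - 2 * M * P) ^ 2 ≤ (2 * √(M ^ 2 - k ^ 2) * P) ^ 2 := by
    nlinarith [mul_le_mul_of_nonneg_right (show Q ≤ 4 * M * P - D by linarith) hD,
      mul_le_mul_of_nonneg_right ht (sq_nonneg P)]
  nlinarith [(abs_le_of_sq_le_sq' hsq (by positivity)).1]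

lemma mul_one_sub_sqrt_one_sub_div_sq_eq_sub_sqrt {M : ℝ} (hM : 0 < M) (k : ℝ) :
    M * (1 - √(1 - k ^ 2 / M ^ 2)) = M - √(M ^ 2 - k ^ 2) := by
  rw [show M ^ 2 - k ^ 2 = M ^ 2 * (1 - k ^ 2 / M ^ 2) by field_simp,
    Real.sqrt_mul (sq_nonneg M), Real.sqrt_sq hM.le]
  ring

lemma mul_one_sub_sqrt_one_sub_div_sq_eq_div {M k : ℝ} (hM : 0 < M) (hkM : |k| ≤ M) :
    M * (1 - √(1 - k ^ 2 / M ^ 2)) = k ^ 2 / (M * (1 + √(1 - k ^ 2 / M ^ 2))) := by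
  have hs : √(1 - k ^ 2 / M ^ 2) ^ 2 = 1 - k ^ 2 / M ^ 2 := Real.sq_sqrt <| by
    rw [sub_nonneg, div_le_one (by positivity)]
    exact sq_le_sq' (abs_le.1 hkM).1 (abs_le.1 hkM).2
  have hMs : M ^ 2 * √(1 - k ^ 2 / M ^ 2) ^ 2 = M ^ 2 - k ^ 2 := by
    rw [hs]; field_simp
  refine eq_div_of_mul_eq (by positivity) ?_
  linear_combination -hMs

lemma sq_div_two_mul_le_mul_one_sub_sqrt_one_sub_div_sq {M k : ℝ} (hM : 0 < M) (hkM : |k| ≤ M) :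
    k ^ 2 / (2 * M) ≤ M * (1 - √(1 - k ^ 2 / M ^ 2)) := by
  rw [mul_one_sub_sqrt_one_sub_div_sq_eq_div hM hkM]
  have hs : √(1 - k ^ 2 / M ^ 2) ≤ 1 := Real.sqrt_le_one.2 (sub_le_self _ (by positivity))
  exact div_le_div_of_nonneg_left (sq_nonneg k) (by positivity) (by nlinarith)

lemma ENNReal.ofReal_abs_sub (a b : ℝ) :
    ENNReal.ofReal |a - b| = ENNReal.ofReal (a - b) + ENNReal.ofReal (b - a) := by
  rcases le_total a b with h | h
  · rw [abs_of_nonpos (sub_nonpos.2 h), ENNReal.ofReal_of_nonpos (sub_nonpos.2 h), zero_add,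
      neg_sub]
  · rw [abs_of_nonneg (sub_nonneg.2 h), ENNReal.ofReal_of_nonpos (sub_nonpos.2 h), add_zero]

lemma exists_measure_Iio_le_half_and_measure_Ioi_le_half (μ : Measure ℝ) [IsProbabilityMeasure μ] :
    ∃ c, μ (Iio c) ≤ 1 / 2 ∧ μ (Ioi c) ≤ 1 / 2 := by
  set F := cdf μ
  set S := {t | (1 / 2 : ℝ) ≤ F t}
  have hS : S.Nonempty :=
    ((tendsto_cdf_atTop μ).eventually (eventually_ge_nhds (by norm_num))).exists
  obtain ⟨b, hb⟩ := ((tendsto_cdf_atBot μ).eventually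
    (eventually_lt_nhds (by norm_num : (0 : ℝ) < 1 / 2))).exists_forall_of_atBot
  have hbdd : BddBelow S := ⟨b, fun t ht => le_of_not_gt fun htb => (hb t htb.le).not_ge ht⟩
  refine ⟨sInf S, ?_, ?_⟩
  · have hlim : Function.leftLim F (sInf S) ≤ 1 / 2 :=
      le_of_tendsto (F.mono.tendsto_leftLim _) (eventually_nhdsWithin_of_forall
        fun t (ht : t < sInf S) => le_of_lt (not_le.1 fun h => (csInf_le hbdd h).not_gt ht))
    rw [← measure_cdf μ, F.measure_Iio (tendsto_cdf_atBot μ), sub_zero]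
    simpa using ENNReal.ofReal_le_ofReal hlim
  · have hc : 1 / 2 ≤ F (sInf S) := by
      refine ge_of_tendsto ((F.right_continuous _).tendsto.mono_left
        (nhdsWithin_mono _ Ioi_subset_Ici_self)) (eventually_nhdsWithin_of_forall fun t ht => ?_)
      obtain ⟨s, hs, hst⟩ := exists_lt_of_csInf_lt hS ht
      exact hs.trans (F.mono hst.le)
    rw [← measure_cdf μ, F.measure_Ioi (tendsto_cdf_atTop μ)]
    simpa using ENNReal.ofReal_le_ofReal (by linarith : 1 - F (sInf S) ≤ 1 / 2)

lemma lintegral_ofReal_abs_mul_sq_le {α : Type*} [MeasurableSpace α] (μ : Measure α)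
    {u v : α → ℝ} (hu : AEMeasurable u μ) (hv : AEMeasurable v μ) :
    (∫⁻ a, ENNReal.ofReal |u a * v a| ∂μ) ^ 2
      ≤ (∫⁻ a, ENNReal.ofReal (u a ^ 2) ∂μ) * ∫⁻ a, ENNReal.ofReal (v a ^ 2) ∂μ := by
  have hsq : ∀ w : ℝ, ENNReal.ofReal (w ^ 2) = ENNReal.ofReal |w| ^ (2 : ℝ) := fun w => by
    rw [ENNReal.ofReal_rpow_of_nonneg (abs_nonneg w) zero_le_two, Real.rpow_two, sq_abs]
  have hCS := ENNReal.lintegral_mul_le_Lp_mul_Lq μ Real.HolderConjugate.two_two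
    (hu.abs.ennreal_ofReal) (hv.abs.ennreal_ofReal)
  simp only [Pi.mul_apply, ← ENNReal.ofReal_mul (abs_nonneg _), ← abs_mul, ← hsq] at hCS
  calc _ ≤ ((∫⁻ a, ENNReal.ofReal (u a ^ 2) ∂μ) ^ (1 / 2 : ℝ)
        * (∫⁻ a, ENNReal.ofReal (v a ^ 2) ∂μ) ^ (1 / 2 : ℝ)) ^ 2 := by gcongr
    _ = _ := by
      rw [mul_pow, ← ENNReal.rpow_natCast, ← ENNReal.rpow_natCast, ← ENNReal.rpow_mul,
        ← ENNReal.rpow_mul]; norm_num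

lemma lintegral_ofReal_sub_sq_of_integral_eq {E : Type*} [MeasurableSpace E] {π : Measure E}
    [IsProbabilityMeasure π] {f : E → ℝ} (hf : AEStronglyMeasurable f π) (hf0 : ∫ x, f x ∂π = 0)
    (hf2 : ∫ x, f x ^ 2 ∂π = 1) (c : ℝ) :
    ∫⁻ x, ENNReal.ofReal ((f x - c) ^ 2) ∂π = ENNReal.ofReal (1 + c ^ 2) := by
  have hint2 : Integrable (fun x => f x ^ 2) π := .of_integral_ne_zero (by simp [hf2])
  have hint : Integrable f π := ((memLp_two_iff_integrable_sq hf).2 hint2).integrable one_le_two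
  have hint' : Integrable (fun x => f x ^ 2 - 2 * c * f x) π := hint2.sub (hint.const_mul _)
  have hexp : ∀ x, (f x - c) ^ 2 = f x ^ 2 - 2 * c * f x + c ^ 2 := fun x => by ring
  rw [← ofReal_integral_eq_lintegral_ofReal _ (.of_forall fun x => sq_nonneg _)]
  · simp_rw [hexp]
    rw [integral_add hint' (integrable_const _), integral_sub hint2 (hint.const_mul _),
      integral_const_mul, hf0, hf2]
    simp
  · simp_rw [hexp]
    exact hint'.add (integrable_const _)

section JumpMeasure

variable {E : Type*} [MeasurableSpace E] {J : Measure (E × E)}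

def CheegerBound (π : Measure E) (J : Measure (E × E)) (κ : ℝ≥0∞) : Prop :=
  ∀ A, MeasurableSet A → π A ≤ 1 / 2 → κ * π A ≤ J (A ×ˢ Aᶜ)

noncomputable def cheegerConstant (π : Measure E) (J : Measure (E × E)) : ℝ≥0∞ :=
  ⨅ A ∈ {A : Set E | MeasurableSet A ∧ 0 < π A ∧ π A ≤ 1 / 2}, J (A ×ˢ Aᶜ) / π A

lemma CheegerBound.mono {π : Measure E} {κ κ' : ℝ≥0∞} (h : CheegerBound π J κ) (hκ : κ' ≤ κ) :
    CheegerBound π J κ' :=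
  fun A hA hA2 => (by gcongr : κ' * π A ≤ κ * π A).trans (h A hA hA2)

lemma cheegerBound_cheegerConstant (π : Measure E) [IsFiniteMeasure π] :
    CheegerBound π J (cheegerConstant π J) := by
  intro A hA hA2
  rcases eq_zero_or_pos (π A) with h0 | h0
  · simp [h0]
  · exact (ENNReal.le_div_iff_mul_le (.inl h0.ne') (.inl (measure_ne_top π A))).1
      (iInf₂_le A ⟨hA, h0, hA2⟩)

lemma toReal_cheegerConstant_le {π : Measure E} {M : ℝ} (hM : 0 ≤ M)
    (hJ : J.map Prod.fst ≤ ENNReal.ofReal M • π) : (cheegerConstant π J).toReal ≤ M := by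
  by_cases hA : ∃ A, MeasurableSet A ∧ 0 < π A ∧ π A ≤ 1 / 2
  · obtain ⟨A, hAm, hA0, hA2⟩ := hA
    have hcut : J (A ×ˢ Aᶜ) ≤ ENNReal.ofReal M * π A :=
      calc J (A ×ˢ Aᶜ) ≤ J.map Prod.fst A :=
            (Measure.map_apply measurable_fst hAm).symm ▸ measure_mono fun p hp => hp.1
        _ ≤ ENNReal.ofReal M * π A := hJ A
    have hle : cheegerConstant π J ≤ ENNReal.ofReal M :=
      (iInf₂_le A ⟨hAm, hA0, hA2⟩).trans (ENNReal.div_le_of_le_mul hcut)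
    simpa [hM] using ENNReal.toReal_mono ofReal_ne_top hle
  · -- an empty infimum is `∞`, and `∞.toReal = 0`
    have htop : cheegerConstant π J = ∞ := by
      simp only [cheegerConstant, iInf₂_eq_top]
      exact fun A hA' => absurd ⟨A, hA'⟩ hA
    simp [htop, hM]

lemma isFiniteMeasure_of_map_fst_le {π : Measure E} [IsFiniteMeasure π] {c : ℝ≥0∞} (hc : c ≠ ∞)
    (hJ : J.map Prod.fst ≤ c • π) : IsFiniteMeasure J where
  measure_univ_lt_top := calc
    J univ = J.map Prod.fst univ := (Measure.map_apply measurable_fst .univ).symm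
    _ ≤ c * π univ := hJ univ
    _ < ∞ := ENNReal.mul_lt_top hc.lt_top (measure_lt_top π univ)

lemma lintegral_comp_swap_of_map_swap (hsym : J.map Prod.swap = J) {F : E × E → ℝ≥0∞}
    (hF : Measurable F) : ∫⁻ p, F p.swap ∂J = ∫⁻ p, F p ∂J := by
  conv_rhs => rw [← hsym]
  rw [lintegral_map hF measurable_swap]

lemma lintegral_comp_fst_le_of_map_fst_le {π : Measure E} {c : ℝ≥0∞}
    (hJ : J.map Prod.fst ≤ c • π) {φ : E → ℝ≥0∞} (hφ : Measurable φ) :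
    ∫⁻ p, φ p.1 ∂J ≤ c * ∫⁻ x, φ x ∂π := by
  rw [← lintegral_map hφ measurable_fst, ← smul_eq_mul, ← lintegral_smul_measure]
  exact lintegral_mono' hJ le_rfl

lemma lintegral_measure_superlevel_prod_compl [SFinite J] {G : E → ℝ} (hG : Measurable G) :
    ∫⁻ t, J ({x | t < G x} ×ˢ {x | t < G x}ᶜ) = ∫⁻ p, ENNReal.ofReal (G p.1 - G p.2) ∂J := by
  set S : Set (ℝ × (E × E)) := {q | q.2 ∈ {x | q.1 < G x} ×ˢ {x | q.1 < G x}ᶜ}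
  have hS : MeasurableSet S :=
    (measurableSet_lt measurable_fst (hG.comp (measurable_fst.comp measurable_snd))).inter
      (measurableSet_lt measurable_fst (hG.comp (measurable_snd.comp measurable_snd))).compl
  have hslice : ∀ p : E × E, (fun t => (t, p)) ⁻¹' S = Ico (G p.2) (G p.1) := fun p => by
    ext t; simp [S, and_comm]
  calc ∫⁻ t, J ({x | t < G x} ×ˢ {x | t < G x}ᶜ) = (volume.prod J) S :=
        (Measure.prod_apply hS).symm
    _ = ∫⁻ p, ENNReal.ofReal (G p.1 - G p.2) ∂J := by
        simp_rw [Measure.prod_apply_symm hS, hslice, Real.volume_Ico]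

lemma two_mul_mul_lintegral_le_lintegral_abs_sub [SFinite J] (hsym : J.map Prod.swap = J)
    {π : Measure E} {κ : ℝ≥0∞} (hκ : CheegerBound π J κ) {G : E → ℝ} (hG : Measurable G)
    (hG0 : 0 ≤ G) (hsupp : π {x | G x ≠ 0} ≤ 1 / 2) :
    2 * (κ * ∫⁻ x, ENNReal.ofReal (G x) ∂π) ≤ ∫⁻ p, ENNReal.ofReal |G p.1 - G p.2| ∂J := by
  have hsub : Measurable fun p : E × E => ENNReal.ofReal (G p.1 - G p.2) := by fun_prop
  have habs : ∫⁻ p, ENNReal.ofReal |G p.1 - G p.2| ∂J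
      = 2 * ∫⁻ p, ENNReal.ofReal (G p.1 - G p.2) ∂J := by
    have hswap : ∫⁻ p, ENNReal.ofReal (G p.2 - G p.1) ∂J
        = ∫⁻ p, ENNReal.ofReal (G p.1 - G p.2) ∂J := lintegral_comp_swap_of_map_swap hsym hsub
    simp_rw [ofReal_abs_sub, lintegral_add_left hsub, hswap, two_mul]
  rw [habs]
  gcongr
  have hA : ∀ t, MeasurableSet {x | t < G x} := fun t => measurableSet_lt measurable_const hG
  calc κ * ∫⁻ x, ENNReal.ofReal (G x) ∂π = κ * ∫⁻ t in Ioi 0, π {x | t < G x} := by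
        rw [lintegral_eq_lintegral_meas_lt π (Filter.Eventually.of_forall hG0) hG.aemeasurable]
    _ = ∫⁻ t in Ioi 0, κ * π {x | t < G x} :=
        (lintegral_const_mul κ (Antitone.measurable fun s t hst =>
          measure_mono fun x (hx : t < G x) => hst.trans_lt hx)).symm
    _ ≤ ∫⁻ t in Ioi 0, J ({x | t < G x} ×ˢ {x | t < G x}ᶜ) :=
        setLIntegral_mono' measurableSet_Ioi fun t (ht : 0 < t) =>
          hκ _ (hA t) ((measure_mono fun x (hx : t < G x) => (ht.trans hx).ne').trans hsupp)
    _ ≤ ∫⁻ t, J ({x | t < G x} ×ˢ {x | t < G x}ᶜ) := setLIntegral_le_lintegral _ _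
    _ = ∫⁻ p, ENNReal.ofReal (G p.1 - G p.2) ∂J := lintegral_measure_superlevel_prod_compl hG

lemma lintegral_sq_add_add_lintegral_sq_sub_le (hsym : J.map Prod.swap = J) {π : Measure E}
    {c : ℝ≥0∞} (hJ : J.map Prod.fst ≤ c • π) {g : E → ℝ} (hg : Measurable g) :
    ∫⁻ p, ENNReal.ofReal ((g p.1 + g p.2) ^ 2) ∂J + ∫⁻ p, ENNReal.ofReal ((g p.1 - g p.2) ^ 2) ∂J
      ≤ 4 * c * ∫⁻ x, ENNReal.ofReal (g x ^ 2) ∂π := by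
  have hsq : Measurable fun x => ENNReal.ofReal (g x ^ 2) := by fun_prop
  have hpar : ∀ a b : ℝ, ENNReal.ofReal ((a + b) ^ 2) + ENNReal.ofReal ((a - b) ^ 2)
      = 2 * ENNReal.ofReal (a ^ 2) + 2 * ENNReal.ofReal (b ^ 2) := fun a b => by
    rw [← ENNReal.ofReal_add (by positivity) (by positivity), ← ENNReal.ofReal_ofNat 2,
      ← ENNReal.ofReal_mul zero_le_two, ← ENNReal.ofReal_mul zero_le_two,
      ← ENNReal.ofReal_add (by positivity) (by positivity)]
    ring_nf
  have hswap : ∫⁻ p, ENNReal.ofReal (g p.2 ^ 2) ∂J = ∫⁻ p, ENNReal.ofReal (g p.1 ^ 2) ∂J :=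
    lintegral_comp_swap_of_map_swap hsym (hsq.comp measurable_fst)
  rw [← lintegral_add_left (by fun_prop)]
  simp_rw [hpar]
  rw [lintegral_add_left (by fun_prop), lintegral_const_mul' _ _ ofNat_ne_top,
    lintegral_const_mul' _ _ ofNat_ne_top, hswap, ← add_mul, two_add_two_eq_four, mul_assoc]
  gcongr
  exact lintegral_comp_fst_le_of_map_fst_le hJ hsq

lemma two_mul_sub_sqrt_mul_lintegral_sq_le [SFinite J] (hsym : J.map Prod.swap = J)
    {π : Measure E} {M k : ℝ} (hM : 0 ≤ M) (hJ : J.map Prod.fst ≤ ENNReal.ofReal M • π)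
    (hk : 0 ≤ k) (hκ : CheegerBound π J (ENNReal.ofReal k)) {g : E → ℝ} (hg : Measurable g)
    (hsupp : π {x | g x ≠ 0} ≤ 1 / 2) (hP : ∫⁻ x, ENNReal.ofReal (g x ^ 2) ∂π ≠ ∞) :
    ENNReal.ofReal (2 * (M - √(M ^ 2 - k ^ 2))) * ∫⁻ x, ENNReal.ofReal (g x ^ 2) ∂π
      ≤ ∫⁻ p, ENNReal.ofReal ((g p.1 - g p.2) ^ 2) ∂J := by
  set P := ∫⁻ x, ENNReal.ofReal (g x ^ 2) ∂π
  set D := ∫⁻ p, ENNReal.ofReal ((g p.1 - g p.2) ^ 2) ∂J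
  set Q := ∫⁻ p, ENNReal.ofReal ((g p.1 + g p.2) ^ 2) ∂J
  have hcheeger : 2 * (ENNReal.ofReal k * P) ≤ ∫⁻ p, ENNReal.ofReal |g p.1 ^ 2 - g p.2 ^ 2| ∂J :=
    two_mul_mul_lintegral_le_lintegral_abs_sub hsym hκ (G := fun x => g x ^ 2) (by fun_prop)
      (fun x => sq_nonneg (g x)) (by simpa using hsupp)
  have hCS : (∫⁻ p, ENNReal.ofReal |g p.1 ^ 2 - g p.2 ^ 2| ∂J) ^ 2 ≤ Q * D := by
    simpa only [← sq_sub_sq] using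
      lintegral_ofReal_abs_mul_sq_le J (u := fun p => g p.1 + g p.2) (v := fun p => g p.1 - g p.2)
        (by fun_prop) (by fun_prop)
  have hQD : Q + D ≤ 4 * ENNReal.ofReal M * P := lintegral_sq_add_add_lintegral_sq_sub_le hsym hJ hg
  by_cases hD : D = ∞
  · rw [hD]; exact le_top
  have hQ : Q ≠ ∞ := ne_top_of_le_ne_top (by finiteness) (le_self_add.trans hQD)
  have hreal := two_mul_sub_sqrt_mul_le (M := M) (k := k) (P := P.toReal) (D := D.toReal)
    (Q := Q.toReal) toReal_nonneg toReal_nonneg ?_ ?_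
  · rw [← ENNReal.ofReal_toReal hP, ← ENNReal.ofReal_mul' toReal_nonneg, ← ENNReal.ofReal_toReal hD]
    exact ENNReal.ofReal_le_ofReal hreal
  · have := ENNReal.toReal_mono (by finiteness) ((pow_le_pow_left' hcheeger 2).trans hCS)
    simpa [ENNReal.toReal_ofReal hk, mul_assoc] using this
  · have := ENNReal.toReal_mono (by finiteness) hQD
    simpa [ENNReal.toReal_add hQ hD, ENNReal.toReal_ofReal hM] using this

lemma two_mul_sub_sqrt_mul_lintegral_sub_sq_le [SFinite J] (hsym : J.map Prod.swap = J)
    {π : Measure E} {M k : ℝ} (hM : 0 ≤ M) (hJ : J.map Prod.fst ≤ ENNReal.ofReal M • π)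
    (hk : 0 ≤ k) (hκ : CheegerBound π J (ENNReal.ofReal k)) {f : E → ℝ} (hf : Measurable f)
    {c : ℝ} (hc₁ : π {x | f x < c} ≤ 1 / 2) (hc₂ : π {x | c < f x} ≤ 1 / 2)
    (hP : ∫⁻ x, ENNReal.ofReal ((f x - c) ^ 2) ∂π ≠ ∞) :
    ENNReal.ofReal (2 * (M - √(M ^ 2 - k ^ 2))) * ∫⁻ x, ENNReal.ofReal ((f x - c) ^ 2) ∂π
      ≤ ∫⁻ p, ENNReal.ofReal ((f p.1 - f p.2) ^ 2) ∂J := by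
  set gpos : E → ℝ := fun x => (f x - c)⁺
  set gneg : E → ℝ := fun x => (f x - c)⁻
  have hgpos : Measurable gpos := by fun_prop
  have hgneg : Measurable gneg := by fun_prop
  have hPsplit : ∫⁻ x, ENNReal.ofReal ((f x - c) ^ 2) ∂π
      = ∫⁻ x, ENNReal.ofReal (gpos x ^ 2) ∂π + ∫⁻ x, ENNReal.ofReal (gneg x ^ 2) ∂π := by
    rw [← lintegral_add_left (by fun_prop)]
    simp_rw [gpos, gneg, ← ENNReal.ofReal_add (sq_nonneg _) (sq_nonneg _),
      posPart_sq_add_negPart_sq]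
  have hDsplit : ∫⁻ p, ENNReal.ofReal ((gpos p.1 - gpos p.2) ^ 2) ∂J
      + ∫⁻ p, ENNReal.ofReal ((gneg p.1 - gneg p.2) ^ 2) ∂J
      ≤ ∫⁻ p, ENNReal.ofReal ((f p.1 - f p.2) ^ 2) ∂J := by
    rw [← lintegral_add_left (by fun_prop)]
    refine lintegral_mono fun p => ?_
    rw [← ENNReal.ofReal_add (sq_nonneg _) (sq_nonneg _)]
    refine ENNReal.ofReal_le_ofReal ?_
    simpa using posPart_sub_posPart_sq_add_negPart_sub_negPart_sq_le (f p.1 - c) (f p.2 - c)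
  have hsupppos : π {x | gpos x ≠ 0} ≤ 1 / 2 :=
    (measure_mono fun x hx => by simpa [gpos] using hx).trans hc₂
  have hsuppneg : π {x | gneg x ≠ 0} ≤ 1 / 2 :=
    (measure_mono fun x hx => by simpa [gneg] using hx).trans hc₁
  rw [hPsplit, ENNReal.add_ne_top] at hP
  rw [hPsplit, mul_add]
  exact (add_le_add (two_mul_sub_sqrt_mul_lintegral_sq_le hsym hM hJ hk hκ hgpos hsupppos hP.1)
    (two_mul_sub_sqrt_mul_lintegral_sq_le hsym hM hJ hk hκ hgneg hsuppneg hP.2)).trans hDsplit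

lemma two_mul_sub_sqrt_le_lintegral_sq_sub [SFinite J] (hsym : J.map Prod.swap = J)
    {π : Measure E} [IsProbabilityMeasure π] {M k : ℝ} (hM : 0 ≤ M)
    (hJ : J.map Prod.fst ≤ ENNReal.ofReal M • π) (hk : 0 ≤ k)
    (hκ : CheegerBound π J (ENNReal.ofReal k)) {f : E → ℝ} (hf : Measurable f)
    (hf0 : ∫ x, f x ∂π = 0) (hf2 : ∫ x, f x ^ 2 ∂π = 1) :
    ENNReal.ofReal (2 * (M - √(M ^ 2 - k ^ 2)))
      ≤ ∫⁻ p, ENNReal.ofReal ((f p.1 - f p.2) ^ 2) ∂J := by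
  have := Measure.isProbabilityMeasure_map (μ := π) hf.aemeasurable
  obtain ⟨c, hc₁, hc₂⟩ := exists_measure_Iio_le_half_and_measure_Ioi_le_half (π.map f)
  rw [Measure.map_apply hf measurableSet_Iio] at hc₁
  rw [Measure.map_apply hf measurableSet_Ioi] at hc₂
  have hP := lintegral_ofReal_sub_sq_of_integral_eq hf.aestronglyMeasurable hf0 hf2 c
  calc ENNReal.ofReal (2 * (M - √(M ^ 2 - k ^ 2)))
      ≤ ENNReal.ofReal (2 * (M - √(M ^ 2 - k ^ 2))) * ENNReal.ofReal (1 + c ^ 2) :=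
        le_mul_of_one_le_right' (ENNReal.one_le_ofReal.2 (le_add_of_nonneg_right (sq_nonneg c)))
    _ ≤ _ := hP ▸ two_mul_sub_sqrt_mul_lintegral_sub_sq_le hsym hM hJ hk hκ hf hc₁ hc₂
        (hP ▸ ofReal_ne_top)

end JumpMeasure

theorem stmt10_general {E : Type*} [MeasurableSpace E] (π : Measure E) [IsProbabilityMeasure π]
    (J : Measure (E × E)) (hsym : Measure.map Prod.swap J = J)
    (M : ℝ) (hM : 0 < M)
    (hnorm : Measure.map Prod.fst J ≤ (ENNReal.ofReal M) • π)
    (k' : ℝ≥0∞)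
    (hk' : k' = ⨅ A ∈ {A : Set E | MeasurableSet A ∧ 0 < π A ∧ π A ≤ 1 / 2},
        J (A ×ˢ Aᶜ) / π A)
    (lam1 : ℝ≥0∞)
    (hlam1 : lam1 = sInf {r | ∃ f : E → ℝ, Measurable f ∧ (∫ x, f x ∂π) = 0 ∧
        (∫ x, (f x) ^ 2 ∂π) = 1 ∧
        r = (1 / 2 : ℝ≥0∞) * ∫⁻ p, ENNReal.ofReal ((f p.1 - f p.2) ^ 2) ∂J}) :
    ENNReal.ofReal (M * (1 - Real.sqrt (1 - k'.toReal ^ 2 / M ^ 2))) ≤ lam1 ∧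
    M * (1 - Real.sqrt (1 - k'.toReal ^ 2 / M ^ 2))
      = k'.toReal ^ 2 / (M * (1 + Real.sqrt (1 - k'.toReal ^ 2 / M ^ 2))) ∧
    k'.toReal ^ 2 / (2 * M) ≤ M * (1 - Real.sqrt (1 - k'.toReal ^ 2 / M ^ 2)) := by
  have := isFiniteMeasure_of_map_fst_le ofReal_ne_top hnorm
  change k' = cheegerConstant π J at hk'
  have hkM : |k'.toReal| ≤ M := by
    rw [abs_of_nonneg toReal_nonneg, hk']
    exact toReal_cheegerConstant_le hM.le hnorm
  have hκ : CheegerBound π J (ENNReal.ofReal k'.toReal) :=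
    (cheegerBound_cheegerConstant π).mono (hk' ▸ ofReal_toReal_le)
  refine ⟨?_, mul_one_sub_sqrt_one_sub_div_sq_eq_div hM hkM,
    sq_div_two_mul_le_mul_one_sub_sqrt_one_sub_div_sq hM hkM⟩
  rw [mul_one_sub_sqrt_one_sub_div_sq_eq_sub_sqrt hM, hlam1]
  refine le_sInf ?_
  rintro _ ⟨f, hf, hf0, hf2, rfl⟩
  have hD := two_mul_sub_sqrt_le_lintegral_sq_sub hsym hM.le hnorm toReal_nonneg hκ hf hf0 hf2
  rw [ENNReal.ofReal_mul zero_le_two, ofReal_ofNat] at hD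
  calc ENNReal.ofReal (M - √(M ^ 2 - k'.toReal ^ 2))
      = 2⁻¹ * (2 * ENNReal.ofReal (M - √(M ^ 2 - k'.toReal ^ 2))) :=
        (ENNReal.inv_mul_cancel_left two_ne_zero ofNat_ne_top).symm
    _ ≤ 1 / 2 * ∫⁻ p, ENNReal.ofReal ((f p.1 - f p.2) ^ 2) ∂J := by
        rw [one_div]; gcongr

/-- Improved Cheeger inequality (1.12) for bounded forms: if `J(dx,E) ≤ M π(dx)`
and `K = 0`, then `λ₁ ≥ M(1 − √(1 − k'²/M²)) ≥ k'²/(2M)`. -/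
theorem stmt10 {E : Type*} [MeasurableSpace E] (π : Measure E) [IsProbabilityMeasure π]
    (J : Measure (E × E)) (hsym : Measure.map Prod.swap J = J)
    (hdiag : J {p : E × E | p.1 = p.2} = 0)
    (M : ℝ) (hM : 0 < M)
    (hnorm : Measure.map Prod.fst J ≤ (ENNReal.ofReal M) • π)
    (k' : ℝ≥0∞)
    (hk' : k' = ⨅ A ∈ {A : Set E | MeasurableSet A ∧ 0 < π A ∧ π A ≤ 1 / 2},
        J (A ×ˢ Aᶜ) / π A)
    (lam1 : ℝ≥0∞)
    (hlam1 : lam1 = sInf {r | ∃ f : E → ℝ, Measurable f ∧ (∫ x, f x ∂π) = 0 ∧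
        (∫ x, (f x) ^ 2 ∂π) = 1 ∧
        r = (1 / 2 : ℝ≥0∞) * ∫⁻ p, ENNReal.ofReal ((f p.1 - f p.2) ^ 2) ∂J}) :
    ENNReal.ofReal (M * (1 - Real.sqrt (1 - k'.toReal ^ 2 / M ^ 2))) ≤ lam1 ∧
    M * (1 - Real.sqrt (1 - k'.toReal ^ 2 / M ^ 2))
      = k'.toReal ^ 2 / (M * (1 + Real.sqrt (1 - k'.toReal ^ 2 / M ^ 2))) ∧
    k'.toReal ^ 2 / (2 * M) ≤ M * (1 - Real.sqrt (1 - k'.toReal ^ 2 / M ^ 2)) :=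
  stmt10_general π J hsym M hM hnorm k' hk' lam1 hlam1
end

section
/- Upper bound on the spectral gap via exponential integrability: Let J(dx,dy) = π(dx) q(x,dy) be symmetric, K = 0, and suppose φ ≥ 0 satisfies 0 < δ₂'(φ) := ess-sup_π ∫ |φ(x) − φ(y)|² q(x,dy) < ∞. Then λ₁ ≤ (δ₂'(φ)/4) · sup{ε² : ε ≥ 0, π(e^{εφ}) < ∞}. In particular, if π(e^{εφ}) = ∞ for all ε > 0, then λ₁ = 0. -/
/-!
For `f = exp (ψ / 2)`, the bound `|eᵃ - eᵇ| ≤ |a - b| max eᵃ eᵇ` and the symmetry of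
`π(dx) q(x, dy)` give `D(f) ≤ (C / 4) π(f²)` as soon as the jump energy
`∫ (ψ x - ψ y)² q(x, dy)` is at most `C`. If moreover `C / 4 < λ₁`, the Poincaré inequality
`λ₁ Var(f) ≤ D(f)` bounds `π(f²)` by a multiple of `π(f)²`, and Cauchy–Schwarz on a set
`{ψ > k}` of small measure bounds `π(f)²` by a constant plus a small multiple of `π(f²)`.
Applied to the truncations `ψ ⊓ n` this bounds `π(e^{ψ ⊓ n})` uniformly in `n`, so `e^ψ` is
integrable by monotone convergence. With `ψ = εφ`, `e^{εφ}` is integrable whenever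
`δ ε² / 4 < λ₁`.
-/

open MeasureTheory ProbabilityTheory Set ENNReal

lemma Real.sq_exp_sub_exp_le (a b : ℝ) :
    (exp a - exp b) ^ 2 ≤ (a - b) ^ 2 * (exp a ^ 2 + exp b ^ 2) := by
  wlog hba : b ≤ a generalizing a b
  · convert this b a (le_of_not_ge hba) using 1 <;> ring
  have h0 : 0 ≤ exp a - exp b := by simpa using exp_le_exp.2 hba
  have h1 : exp a - exp b ≤ (a - b) * exp a := by
    have := mul_le_mul_of_nonneg_right (add_one_le_exp (b - a)) (exp_pos a).le
    rw [← exp_add, sub_add_cancel] at this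
    linarith
  nlinarith [pow_le_pow_left₀ h0 h1 2, sq_nonneg (exp b)]

lemma sq_min_sub_min_le (a b c : ℝ) : (min a c - min b c) ^ 2 ≤ (a - b) ^ 2 := by
  have h := abs_min_sub_min_le_max a c b c
  rw [sub_self, abs_zero, max_eq_left (abs_nonneg _)] at h
  exact sq_le_sq.2 (by simpa using h)

lemma le_mul_sSup_sq_of_forall {d L : ℝ≥0∞} (hd0 : d ≠ 0) (hd : d ≠ ⊤) {P : ℝ → Prop}
    (hP : ∀ ε : ℝ, 0 ≤ ε → d * ENNReal.ofReal (ε ^ 2) < L → P ε) :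
    L ≤ d * sSup {x | ∃ ε : ℝ, 0 ≤ ε ∧ P ε ∧ x = ENNReal.ofReal (ε ^ 2)} := by
  rw [mul_comm, ← ENNReal.div_le_iff hd0 hd]
  refine le_of_forall_lt_imp_le_of_dense fun u hu => le_sSup ?_
  have hu_sq : ENNReal.ofReal (√u.toReal ^ 2) = u := by
    rw [Real.sq_sqrt toReal_nonneg, ofReal_toReal (ne_top_of_lt hu)]
  exact ⟨√u.toReal, Real.sqrt_nonneg _,
    hP _ (Real.sqrt_nonneg _) (by rw [hu_sq]; exact mul_lt_of_lt_div' hu), hu_sq.symm⟩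

section Truncation

variable {Ω : Type*} [MeasurableSpace Ω] {μ : Measure Ω}

lemma integral_le_add_sqrt_measureReal_mul [IsProbabilityMeasure μ] {f : Ω → ℝ} (hf0 : 0 ≤ f)
    (hf : MemLp f 2 μ) {A : Set Ω} (hA : MeasurableSet A) {K : ℝ} (hK : 0 ≤ K)
    (hfK : ∀ x ∉ A, f x ≤ K) :
    ∫ x, f x ∂μ ≤ K + √(μ.real A * ∫ x, f x ^ 2 ∂μ) := by
  have hf1 : Integrable f μ := hf.integrable one_le_two
  have hCS : ∫ x, f x * A.indicator 1 x ∂μ ≤ √(∫ x, f x ^ 2 ∂μ) * √(μ.real A) := by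
    have hind : MemLp (A.indicator (1 : Ω → ℝ)) 2 μ := (memLp_const 1).indicator hA
    have := integral_mul_le_Lp_mul_Lq_of_nonneg Real.HolderConjugate.two_two
      (ae_of_all _ hf0) (ae_of_all _ fun x => ?_) (by simpa using hf) (by simpa using hind)
    · simp_rw [Real.sqrt_eq_rpow]
      convert this using 3
      · norm_cast
      · rw [← integral_indicator_one hA]
        congr with x
        by_cases hx : x ∈ A <;> simp [hx]
    · by_cases hx : x ∈ A <;> simp [hx]
  have hind_eq : (fun x => f x * A.indicator 1 x) = A.indicator f := by
    ext x; by_cases hx : x ∈ A <;> simp [hx]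
  have hpt : ∀ x, f x ≤ K + A.indicator f x := fun x => by
    by_cases hx : x ∈ A <;> simp [hx, hK, hfK]
  calc ∫ x, f x ∂μ ≤ ∫ x, K + A.indicator f x ∂μ :=
        integral_mono hf1 ((integrable_const K).add (hf1.indicator hA)) hpt
    _ = K + ∫ x, f x * A.indicator 1 x ∂μ := by
        rw [integral_add (integrable_const K) (hf1.indicator hA), integral_const, probReal_univ,
          one_smul, hind_eq]
    _ ≤ K + √(μ.real A * ∫ x, f x ^ 2 ∂μ) := by
        rw [Real.sqrt_mul' _ (integral_nonneg fun x => sq_nonneg _), mul_comm (√_)]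
        linarith

/-- `(∫ f)² ≤ 2 K² + 2 μ(A) ∫ f²` by the previous lemma, and the smallness of `μ(A)` lets the
second term be absorbed into the left-hand side of the variance bound. -/
lemma integral_sq_le_of_mul_variance_le [IsProbabilityMeasure μ] {f : Ω → ℝ} (hf0 : 0 ≤ f)
    (hf : MemLp f 2 μ) {γ c : ℝ} (hc0 : 0 ≤ c) (hcγ : c < γ)
    (hvar : γ * Var[f; μ] ≤ c * ∫ x, f x ^ 2 ∂μ)
    {A : Set Ω} (hA : MeasurableSet A) (hγA : 4 * γ * μ.real A ≤ γ - c)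
    {K : ℝ} (hK : 0 ≤ K) (hfK : ∀ x ∉ A, f x ≤ K) :
    ∫ x, f x ^ 2 ∂μ ≤ 4 * γ * K ^ 2 / (γ - c) := by
  set a := ∫ x, f x ^ 2 ∂μ
  set m := ∫ x, f x ∂μ
  set p := μ.real A
  have hm : m ≤ K + √(p * a) := integral_le_add_sqrt_measureReal_mul hf0 hf hA hK hfK
  have hm0 : 0 ≤ m := integral_nonneg hf0
  have ha0 : 0 ≤ a := integral_nonneg fun x => sq_nonneg _
  have hpa : √(p * a) ^ 2 = p * a := Real.sq_sqrt (mul_nonneg measureReal_nonneg ha0)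
  have hm2 : m ^ 2 ≤ 2 * K ^ 2 + 2 * (p * a) := by
    nlinarith [pow_le_pow_left₀ hm0 hm 2, sq_nonneg (K - √(p * a))]
  have hVar : Var[f; μ] = a - m ^ 2 := variance_eq_sub hf
  rw [hVar] at hvar
  rw [le_div_iff₀ (sub_pos.2 hcγ)]
  nlinarith [mul_le_mul_of_nonneg_left hm2 (hc0.trans hcγ.le), mul_le_mul_of_nonneg_right hγA ha0]

lemma integrable_exp_of_integral_exp_min_le [IsFiniteMeasure μ] {ψ : Ω → ℝ} (hψ : Measurable ψ)
    {M : ℝ} (hM : ∀ n : ℕ, ∫ x, Real.exp (min (ψ x) n) ∂μ ≤ M) :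
    Integrable (fun x => Real.exp (ψ x)) μ := by
  refine ⟨by fun_prop, ?_⟩
  rw [hasFiniteIntegral_iff_ofReal (ae_of_all _ fun x => (Real.exp_pos _).le)]
  have hsup : ∀ x, ENNReal.ofReal (Real.exp (ψ x)) =
      ⨆ n : ℕ, ENNReal.ofReal (Real.exp (min (ψ x) n)) := fun x => by
    refine le_antisymm ?_ (iSup_le fun n => by gcongr; exact min_le_left _ _)
    obtain ⟨n, hn⟩ := exists_nat_ge (ψ x)
    exact le_iSup_of_le n (by rw [min_eq_left hn])
  have hmono : Monotone fun (n : ℕ) x => ENNReal.ofReal (Real.exp (min (ψ x) n)) :=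
    fun n k hnk x => by dsimp only; gcongr
  calc ∫⁻ x, ENNReal.ofReal (Real.exp (ψ x)) ∂μ
      = ⨆ n : ℕ, ∫⁻ x, ENNReal.ofReal (Real.exp (min (ψ x) n)) ∂μ := by
        simp_rw [hsup]; exact lintegral_iSup (fun n => by fun_prop) hmono
    _ ≤ ENNReal.ofReal M := iSup_le fun n => by
        have hint : Integrable (fun x => Real.exp (min (ψ x) n)) μ :=
          Integrable.of_bound (by fun_prop) (Real.exp n) (ae_of_all _ fun x => by
            rw [Real.norm_of_nonneg (Real.exp_pos _).le]; gcongr; exact min_le_right _ _)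
        rw [← ofReal_integral_eq_lintegral_ofReal hint (ae_of_all _ fun x => (Real.exp_pos _).le)]
        exact ENNReal.ofReal_le_ofReal (hM n)
    _ < ⊤ := ofReal_lt_top

lemma exists_measureReal_lt_nat_lt [IsFiniteMeasure μ] {ψ : Ω → ℝ} (hψ : Measurable ψ) {η : ℝ}
    (hη : 0 < η) : ∃ k : ℕ, μ.real {x | (k : ℝ) < ψ x} < η := by
  have hanti : Antitone fun k : ℕ => {x | (k : ℝ) < ψ x} :=
    fun i j hij x (hx : (j : ℝ) < ψ x) => show (i : ℝ) < ψ x from (Nat.cast_le.2 hij).trans_lt hx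
  have hempty : ⋂ k : ℕ, {x | (k : ℝ) < ψ x} = ∅ := by
    refine eq_empty_of_forall_notMem fun x hx => ?_
    obtain ⟨k, hk⟩ := exists_nat_ge (ψ x)
    exact (mem_iInter.1 hx k).not_ge hk
  have hlim := tendsto_measure_iInter_atTop
    (fun k => (measurableSet_lt measurable_const hψ).nullMeasurableSet) hanti
    ⟨0, measure_ne_top μ _⟩
  rw [hempty, measure_empty] at hlim
  obtain ⟨k, hk⟩ := (hlim.eventually_lt_const (ENNReal.ofReal_pos.2 hη)).exists
  exact ⟨k, ENNReal.toReal_lt_of_lt_ofReal hk⟩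

end Truncation

section JumpProcess

variable {E : Type*} [MeasurableSpace E] {π : Measure E} {q : Kernel E E}

noncomputable def dirichletForm (π : Measure E) (q : Kernel E E) (f : E → ℝ) : ℝ≥0∞ :=
  (1 / 2 : ℝ≥0∞) * ∫⁻ p, ENNReal.ofReal ((f p.1 - f p.2) ^ 2) ∂(π.compProd q)

/-- The paper's `δ₂'(φ)` is the `π`-essential supremum of `jumpEnergy q φ`. -/
noncomputable def jumpEnergy (q : Kernel E E) (f : E → ℝ) (x : E) : ℝ≥0∞ :=
  ∫⁻ y, ENNReal.ofReal ((f x - f y) ^ 2) ∂(q x)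

noncomputable def spectralGap (π : Measure E) (q : Kernel E E) : ℝ≥0∞ :=
  sInf {r | ∃ f : E → ℝ, Measurable f ∧ (∫ x, f x ∂π) = 0 ∧ (∫ x, (f x) ^ 2 ∂π) = 1 ∧
    r = dirichletForm π q f}

lemma dirichletForm_const_mul_sub (f : E → ℝ) (a b : ℝ) :
    dirichletForm π q (fun x => a * (f x - b)) =
      ENNReal.ofReal (a ^ 2) * dirichletForm π q f := by
  have h : ∀ p : E × E, ENNReal.ofReal ((a * (f p.1 - b) - a * (f p.2 - b)) ^ 2) =
      ENNReal.ofReal (a ^ 2) * ENNReal.ofReal ((f p.1 - f p.2) ^ 2) := fun p => by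
    rw [← ENNReal.ofReal_mul (sq_nonneg a)]; ring_nf
  simp only [dirichletForm, h, lintegral_const_mul' _ _ ofReal_ne_top]
  ring

lemma spectralGap_mul_variance_le [IsProbabilityMeasure π] {f : E → ℝ} (hf : Measurable f)
    (hf2 : MemLp f 2 π) :
    spectralGap π q * ENNReal.ofReal Var[f; π] ≤ dirichletForm π q f := by
  set v := Var[f; π]
  rcases (variance_nonneg f π).eq_or_lt with hv | hv
  · simp [v, ← hv]
  set a := (√v)⁻¹
  have ha : a ^ 2 * v = 1 := by
    rw [inv_pow, Real.sq_sqrt hv.le, inv_mul_cancel₀ hv.ne']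
  set g : E → ℝ := fun x => a * (f x - π[f])
  have hg_mean : ∫ x, g x ∂π = 0 := by
    simp [g, integral_const_mul, integral_sub (hf2.integrable one_le_two) (integrable_const _)]
  have hg_sq : ∫ x, g x ^ 2 ∂π = 1 := by
    simp only [g, mul_pow, integral_const_mul]
    rw [← variance_eq_integral hf.aemeasurable, ha]
  have hgap : spectralGap π q ≤ ENNReal.ofReal (a ^ 2) * dirichletForm π q f :=
    dirichletForm_const_mul_sub (q := q) f a π[f] ▸
      sInf_le ⟨g, by fun_prop, hg_mean, hg_sq, rfl⟩
  calc spectralGap π q * ENNReal.ofReal v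
      ≤ ENNReal.ofReal (a ^ 2) * dirichletForm π q f * ENNReal.ofReal v := by gcongr
    _ = dirichletForm π q f := by
        rw [mul_right_comm, ← ENNReal.ofReal_mul (sq_nonneg a), ha, ENNReal.ofReal_one, one_mul]

lemma lintegral_compProd_swap (hsym : (π.compProd q).map Prod.swap = π.compProd q)
    {F : E × E → ℝ≥0∞} (hF : Measurable F) :
    ∫⁻ p, F p.swap ∂(π.compProd q) = ∫⁻ p, F p ∂(π.compProd q) := by
  conv_rhs => rw [← hsym]
  rw [lintegral_map hF measurable_swap]

lemma lintegral_compProd_mul_fst_le [SFinite π] [IsSFiniteKernel q] {G : E × E → ℝ≥0∞}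
    {H : E → ℝ≥0∞} (hG : Measurable G) (hH : Measurable H) {C : ℝ≥0∞}
    (hGC : ∀ᵐ x ∂π, ∫⁻ y, G (x, y) ∂(q x) ≤ C) :
    ∫⁻ p, G p * H p.1 ∂(π.compProd q) ≤ C * ∫⁻ x, H x ∂π := by
  rw [Measure.lintegral_compProd (by fun_prop), ← lintegral_const_mul _ hH]
  refine lintegral_mono_ae ?_
  filter_upwards [hGC] with x hx
  rw [lintegral_mul_const _ (by fun_prop)]
  exact mul_le_mul_left hx _

lemma ae_jumpEnergy_le_of_sq_sub_le {u ψ : E → ℝ} {L C : ℝ} (hL : 0 ≤ L)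
    (hu : ∀ x y, (u x - u y) ^ 2 ≤ L * (ψ x - ψ y) ^ 2)
    (hψ : ∀ᵐ x ∂π, jumpEnergy q ψ x ≤ ENNReal.ofReal C) :
    ∀ᵐ x ∂π, jumpEnergy q u x ≤ ENNReal.ofReal (L * C) := by
  filter_upwards [hψ] with x hx
  calc jumpEnergy q u x
      ≤ ∫⁻ y, ENNReal.ofReal L * ENNReal.ofReal ((ψ x - ψ y) ^ 2) ∂(q x) := by
        refine lintegral_mono fun y => ?_
        rw [← ENNReal.ofReal_mul hL]
        exact ENNReal.ofReal_le_ofReal (hu x y)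
    _ ≤ ENNReal.ofReal (L * C) := by
        rw [lintegral_const_mul' _ _ ofReal_ne_top, ENNReal.ofReal_mul hL]
        exact mul_le_mul_right hx _

lemma dirichletForm_exp_le [SFinite π] [IsSFiniteKernel q]
    (hsym : (π.compProd q).map Prod.swap = π.compProd q) {u : E → ℝ} (hu : Measurable u)
    {C : ℝ≥0∞} (hC : ∀ᵐ x ∂π, jumpEnergy q u x ≤ C) :
    dirichletForm π q (fun x => Real.exp (u x)) ≤
      C * ∫⁻ x, ENNReal.ofReal (Real.exp (u x) ^ 2) ∂π := by
  set G : E × E → ℝ≥0∞ := fun p => ENNReal.ofReal ((u p.1 - u p.2) ^ 2)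
  set H : E → ℝ≥0∞ := fun x => ENNReal.ofReal (Real.exp (u x) ^ 2)
  have hG : Measurable G := by fun_prop
  have hH : Measurable H := by fun_prop
  have hpt : ∀ p : E × E, ENNReal.ofReal ((Real.exp (u p.1) - Real.exp (u p.2)) ^ 2) ≤
      G p * H p.1 + G p * H p.2 := fun p => by
    rw [← mul_add, ← ENNReal.ofReal_add (by positivity) (by positivity),
      ← ENNReal.ofReal_mul (sq_nonneg _)]
    exact ENNReal.ofReal_le_ofReal (Real.sq_exp_sub_exp_le _ _)
  have hswap : ∫⁻ p, G p * H p.2 ∂(π.compProd q) = ∫⁻ p, G p * H p.1 ∂(π.compProd q) := by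
    rw [← lintegral_compProd_swap hsym (by fun_prop)]
    congr with p
    simp only [G, Prod.fst_swap, Prod.snd_swap]
    rw [← neg_sub, neg_sq]
  calc dirichletForm π q (fun x => Real.exp (u x))
      ≤ 1 / 2 * ∫⁻ p, G p * H p.1 + G p * H p.2 ∂(π.compProd q) := by
        unfold dirichletForm; gcongr with p; exact hpt p
    _ = ∫⁻ p, G p * H p.1 ∂(π.compProd q) := by
        rw [lintegral_add_left (by fun_prop), hswap, ← two_mul, ← mul_assoc,
          ENNReal.div_mul_cancel two_ne_zero ofNat_ne_top, one_mul]
    _ ≤ C * ∫⁻ x, H x ∂π := lintegral_compProd_mul_fst_le hG hH hC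

lemma mul_variance_exp_le_of_le_spectralGap [IsProbabilityMeasure π] [IsSFiniteKernel q]
    (hsym : (π.compProd q).map Prod.swap = π.compProd q) {u : E → ℝ} (hu : Measurable u)
    (hu2 : MemLp (fun x => Real.exp (u x)) 2 π) {γ c : ℝ} (hc0 : 0 ≤ c)
    (hγ : ENNReal.ofReal γ ≤ spectralGap π q)
    (hc : ∀ᵐ x ∂π, jumpEnergy q u x ≤ ENNReal.ofReal c) :
    γ * Var[fun x => Real.exp (u x); π] ≤ c * ∫ x, Real.exp (u x) ^ 2 ∂π := by
  rcases le_or_gt γ 0 with hγ0 | hγ0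
  · exact (mul_nonpos_of_nonpos_of_nonneg hγ0 (variance_nonneg _ _)).trans
      (mul_nonneg hc0 (integral_nonneg fun x => sq_nonneg _))
  have hdir : dirichletForm π q (fun x => Real.exp (u x)) ≤
      ENNReal.ofReal (c * ∫ x, Real.exp (u x) ^ 2 ∂π) := by
    rw [ENNReal.ofReal_mul hc0, ofReal_integral_eq_lintegral_ofReal hu2.integrable_sq
      (ae_of_all _ fun x => sq_nonneg _)]
    exact dirichletForm_exp_le hsym hu hc
  have := (mul_le_mul_left hγ _).trans
    ((spectralGap_mul_variance_le (by fun_prop) hu2).trans hdir)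
  rw [← ENNReal.ofReal_mul hγ0.le] at this
  exact (ENNReal.ofReal_le_ofReal_iff (by positivity)).1 this

lemma integrable_exp_of_ofReal_div_four_lt_spectralGap [IsProbabilityMeasure π]
    [IsSFiniteKernel q] (hsym : (π.compProd q).map Prod.swap = π.compProd q) {ψ : E → ℝ}
    (hψ : Measurable ψ) {C : ℝ} (hC0 : 0 ≤ C)
    (hC : ∀ᵐ x ∂π, jumpEnergy q ψ x ≤ ENNReal.ofReal C)
    (hgap : ENNReal.ofReal (C / 4) < spectralGap π q) :
    Integrable (fun x => Real.exp (ψ x)) π := by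
  set c := C / 4
  have hc0 : 0 ≤ c := by positivity
  obtain ⟨γ, hcγ, hγ⟩ : ∃ γ : ℝ, c < γ ∧ ENNReal.ofReal γ ≤ spectralGap π q := by
    obtain ⟨r, hcr, hr⟩ := exists_between hgap
    exact ⟨r.toReal, (ENNReal.ofReal_lt_iff_lt_toReal hc0 hr.ne_top).1 hcr,
      ENNReal.ofReal_toReal_le.trans hr.le⟩
  have hγ0 : 0 < γ := hc0.trans_lt hcγ
  set f : ℕ → E → ℝ := fun n x => Real.exp (min (ψ x) n / 2)
  have hf_meas : ∀ n, Measurable (f n) := fun n => by fun_prop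
  have hf_sq : ∀ n x, f n x ^ 2 = Real.exp (min (ψ x) n) := fun n x => by
    simp only [f]; rw [Real.exp_half, Real.sq_sqrt (Real.exp_pos _).le]
  have hf_memLp : ∀ n, MemLp (f n) 2 π := fun n =>
    MemLp.of_bound (hf_meas n).aestronglyMeasurable (Real.exp (n / 2)) (ae_of_all _ fun x => by
      rw [Real.norm_of_nonneg (Real.exp_pos _).le]; gcongr; exact min_le_right _ _)
  have henergy : ∀ n : ℕ, ∀ᵐ x ∂π, jumpEnergy q (fun x => min (ψ x) n / 2) x ≤ ENNReal.ofReal c :=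
    fun n => by
      rw [show c = 1 / 4 * C by simp only [c]; ring]
      refine ae_jumpEnergy_le_of_sq_sub_le (by norm_num) (fun x y => ?_) hC
      linarith [sq_min_sub_min_le (ψ x) (ψ y) (n : ℝ)]
  have hvar : ∀ n, γ * Var[f n; π] ≤ c * ∫ x, f n x ^ 2 ∂π := fun n =>
    mul_variance_exp_le_of_le_spectralGap hsym (by fun_prop) (hf_memLp n) hc0 hγ (henergy n)
  obtain ⟨k, hk⟩ := exists_measureReal_lt_nat_lt (μ := π) hψ
    (div_pos (sub_pos.2 hcγ) (by positivity : 0 < 4 * γ))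
  have hγA : 4 * γ * π.real {x | (k : ℝ) < ψ x} ≤ γ - c := by
    rw [lt_div_iff₀ (by positivity)] at hk; linarith
  refine integrable_exp_of_integral_exp_min_le hψ (M := 4 * γ * Real.exp (k / 2) ^ 2 / (γ - c))
    fun n => ?_
  simp_rw [← hf_sq n]
  refine integral_sq_le_of_mul_variance_le (fun x => (Real.exp_pos _).le) (hf_memLp n) hc0 hcγ
    (hvar n) (measurableSet_lt measurable_const hψ) hγA (Real.exp_pos (k / 2)).le fun x hx => ?_
  show Real.exp (min (ψ x) n / 2) ≤ Real.exp (k / 2)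
  gcongr
  exact (min_le_left _ _).trans (not_lt.1 hx)

end JumpProcess

theorem stmt15_general {E : Type*} [MeasurableSpace E] (π : Measure E) [IsProbabilityMeasure π]
    (q : Kernel E E) [IsSFiniteKernel q]
    (hsym : Measure.map Prod.swap (π.compProd q) = π.compProd q)
    (φ : E → ℝ) (hφ : Measurable φ)
    (δ : ℝ) (hδpos : 0 < δ)
    (hδ : ∀ᵐ x ∂π, (∫⁻ y, ENNReal.ofReal ((φ x - φ y) ^ 2) ∂(q x)) ≤ ENNReal.ofReal δ)
    (lam1 : ℝ≥0∞)
    (hlam1 : lam1 = sInf {r | ∃ f : E → ℝ, Measurable f ∧ (∫ x, f x ∂π) = 0 ∧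
        (∫ x, (f x) ^ 2 ∂π) = 1 ∧
        r = (1 / 2 : ℝ≥0∞) *
          ∫⁻ p, ENNReal.ofReal ((f p.1 - f p.2) ^ 2) ∂(π.compProd q)}) :
    lam1 ≤ ENNReal.ofReal (δ / 4) *
        sSup {x : ℝ≥0∞ | ∃ ε : ℝ, 0 ≤ ε ∧
          Integrable (fun y => Real.exp (ε * φ y)) π ∧ x = ENNReal.ofReal (ε ^ 2)} ∧
    ((∀ ε : ℝ, 0 < ε → ¬ Integrable (fun y => Real.exp (ε * φ y)) π) → lam1 = 0) := by
  change lam1 = spectralGap π q at hlam1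
  have hd0 : ENNReal.ofReal (δ / 4) ≠ 0 := (ENNReal.ofReal_pos.2 (by positivity)).ne'
  have hbound := le_mul_sSup_sq_of_forall (L := lam1) hd0 ofReal_ne_top fun ε hε hlt => by
    refine integrable_exp_of_ofReal_div_four_lt_spectralGap hsym (hφ.const_mul ε)
      (by positivity) (ae_jumpEnergy_le_of_sq_sub_le (sq_nonneg ε) (fun x y => ?_) hδ) ?_
    · exact (by ring : (ε * φ x - ε * φ y) ^ 2 = ε ^ 2 * (φ x - φ y) ^ 2).le
    · rw [← hlam1, mul_div_assoc, ENNReal.ofReal_mul (sq_nonneg ε), mul_comm]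
      exact hlt
  refine ⟨hbound, fun hnot => le_antisymm (hbound.trans_eq ?_) bot_le⟩
  refine mul_eq_zero_of_right _ (le_antisymm (sSup_le fun x ⟨ε, hε, hint, hx⟩ => ?_) bot_le)
  obtain rfl : 0 = ε := hε.eq_of_not_lt fun hpos => hnot ε hpos hint
  simp [hx]

/-- Theorem 1.5 (jump process form): if `J(dx,dy) = π(dx)q(x,dy)` is symmetric
and `φ ≥ 0` satisfies `∫ |φ(x) − φ(y)|² q(x,dy) ≤ δ₂'` π-a.e. with `δ₂' > 0`,
then `λ₁ ≤ (δ₂'/4)·sup{ε² : ε ≥ 0, π(e^{εφ}) < ∞}`; in particular `λ₁ = 0`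
whenever `e^{εφ}` is not integrable for any `ε > 0`. -/
theorem stmt15 {E : Type*} [MeasurableSpace E] (π : Measure E) [IsProbabilityMeasure π]
    (q : Kernel E E) [IsSFiniteKernel q]
    (hsym : Measure.map Prod.swap (π.compProd q) = π.compProd q)
    (φ : E → ℝ) (hφ : Measurable φ) (hφnn : ∀ x, 0 ≤ φ x)
    (δ : ℝ) (hδpos : 0 < δ)
    (hδ : ∀ᵐ x ∂π, (∫⁻ y, ENNReal.ofReal ((φ x - φ y) ^ 2) ∂(q x)) ≤ ENNReal.ofReal δ)
    (lam1 : ℝ≥0∞)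
    (hlam1 : lam1 = sInf {r | ∃ f : E → ℝ, Measurable f ∧ (∫ x, f x ∂π) = 0 ∧
        (∫ x, (f x) ^ 2 ∂π) = 1 ∧
        r = (1 / 2 : ℝ≥0∞) *
          ∫⁻ p, ENNReal.ofReal ((f p.1 - f p.2) ^ 2) ∂(π.compProd q)}) :
    lam1 ≤ ENNReal.ofReal (δ / 4) *
        sSup {x : ℝ≥0∞ | ∃ ε : ℝ, 0 ≤ ε ∧
          Integrable (fun y => Real.exp (ε * φ y)) π ∧ x = ENNReal.ofReal (ε ^ 2)} ∧
    ((∀ ε : ℝ, 0 < ε → ¬ Integrable (fun y => Real.exp (ε * φ y)) π) → lam1 = 0) :=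
  stmt15_general π q hsym φ hφ δ hδpos hδ lam1 hlam1
end
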